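/- arXiv:1003.4189 — 3 statements merged into one kernel-verified Lean document; each statement's English description precedes it below -/
import Mathlib

section
/- Let d ∈ (0,1), h ∈ ℝ, R > 0, and let y, Φ : (0,R] → (0,∞) be continuous. Assume there exist constants C > 0, M > 0 and ε₀ ∈ (0,1/2] such that one of the following holds: (a) for every ε ∈ (0,ε₀] and every r ∈ (0,R/2], one has y(r) ≤ C·ε^{−h}·Φ(r)·y(r(1−ε))^d and max{Φ(τ) : τ ∈ [r/2,r]} ≤ M·Φ(r); or (b) for every ε ∈ (0,ε₀] and every r ∈ (0,R/2], one has y(r) ≤ C·ε^{−h}·Φ(r)·y(r(1+ε))^d and max{Φ(τ) : τ ∈ [r,3r/2]} ≤ M·Φ(r). Then there exists a constant C' > 0 such that y(r) ≤ C'·Φ(r)^{1/(1−d)} for all r ∈ (0,R/2]. -/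
open Set Finset Filter Topology

/-!
Fix `r` and follow the chain `ρₙ = r ∏_{k<n} (1 ∓ εₖ)` with `εₖ = ε₀ 2^{-(k+2)}`.
Since `∑ εₖ ≤ ε₀/2`, the chain stays in `[r/2, r]` (resp. `[r, 3r/2]`), where `Φ ≤ M Φ(r)`
and `y` is bounded. The hypothesis then reads `y(ρₙ) ≤ a bⁿ y(ρₙ₊₁)^d` with
`a = C M Φ(r) (ε₀/4)^{-h}` and `b = 2^h`, and iterating gives
`y(r) ≤ a^{∑ dᵏ} b^{∑ k dᵏ} y(ρₙ)^{dⁿ}`. Letting `n → ∞`, the bounded factor `y(ρₙ)^{dⁿ}`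
disappears, and `∑ dᵏ = 1/(1-d)` produces the power `Φ(r)^{1/(1-d)}`. In case (b) the chain must
stay below `R/2`, which holds for `r ≤ R/3`; on `[R/3, R/2]` compactness suffices.
-/

theorem one_sub_sum_le_prod_one_sub {ι : Type*} (s : Finset ι) {ε : ι → ℝ}
    (h0 : ∀ i ∈ s, 0 ≤ ε i) (h1 : ∀ i ∈ s, ε i ≤ 1) :
    1 - ∑ i ∈ s, ε i ≤ ∏ i ∈ s, (1 - ε i) := by
  classical
  induction s using Finset.induction_on with
  | empty => simp
  | insert j s hj ih =>
    rw [prod_insert hj, sum_insert hj]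
    have hεj := h1 j (mem_insert_self j s)
    have hprod := ih (fun i hi => h0 i (mem_insert_of_mem hi))
      (fun i hi => h1 i (mem_insert_of_mem hi))
    have hs : 0 ≤ ∑ i ∈ s, ε i := sum_nonneg fun i hi => h0 i (mem_insert_of_mem hi)
    nlinarith [h0 j (mem_insert_self j s)]

theorem prod_one_add_le_exp_sum {ι : Type*} (s : Finset ι) {ε : ι → ℝ}
    (h : ∀ i ∈ s, -1 ≤ ε i) : ∏ i ∈ s, (1 + ε i) ≤ Real.exp (∑ i ∈ s, ε i) := by
  rw [Real.exp_sum]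
  exact prod_le_prod (fun i hi => by linarith [h i hi])
    fun i _ => by linarith [Real.add_one_le_exp (ε i)]

theorem le_of_le_mul_pow_mul_rpow {d a b : ℝ} (hd0 : 0 ≤ d) (hd1 : d < 1) (ha : 0 < a)
    (hb : 0 < b) {Y : ℕ → ℝ} (hY0 : ∀ n, 0 ≤ Y n) (hYB : BddAbove (range Y))
    (hstep : ∀ n, Y n ≤ a * b ^ n * Y (n + 1) ^ d) :
    Y 0 ≤ a ^ (1 / (1 - d)) * b ^ (d / (1 - d) ^ 2) := by
  have hiter : ∀ n, Y 0 ≤ a ^ (∑ k ∈ range n, d ^ k) *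
      b ^ (∑ k ∈ range n, (k : ℝ) * d ^ k) * Y n ^ d ^ n := by
    intro n
    induction n with
    | zero => simp
    | succ n ih =>
      have hdn : 0 ≤ d ^ n := pow_nonneg hd0 n
      have hnext : Y n ^ d ^ n ≤ a ^ d ^ n * b ^ ((n : ℝ) * d ^ n) * Y (n + 1) ^ d ^ (n + 1) := by
        calc Y n ^ d ^ n ≤ (a * b ^ n * Y (n + 1) ^ d) ^ d ^ n :=
              Real.rpow_le_rpow (hY0 n) (hstep n) hdn
          _ = a ^ d ^ n * b ^ ((n : ℝ) * d ^ n) * Y (n + 1) ^ d ^ (n + 1) := by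
              rw [Real.mul_rpow (by positivity) (Real.rpow_nonneg (hY0 _) _),
                Real.mul_rpow ha.le (by positivity), ← Real.rpow_natCast_mul hb.le,
                ← Real.rpow_mul (hY0 _), pow_succ']
      calc Y 0 ≤ a ^ (∑ k ∈ range n, d ^ k) * b ^ (∑ k ∈ range n, (k : ℝ) * d ^ k) *
            Y n ^ d ^ n := ih
        _ ≤ a ^ (∑ k ∈ range n, d ^ k) * b ^ (∑ k ∈ range n, (k : ℝ) * d ^ k) *
            (a ^ d ^ n * b ^ ((n : ℝ) * d ^ n) * Y (n + 1) ^ d ^ (n + 1)) := by gcongr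
        _ = _ := by
            rw [sum_range_succ, sum_range_succ, Real.rpow_add ha, Real.rpow_add hb]
            ring
  obtain ⟨B, hB⟩ := hYB
  set B' := max B 1
  have hB' : 0 < B' := lt_max_of_lt_right one_pos
  have hbound : ∀ n, Y 0 ≤ a ^ (∑ k ∈ range n, d ^ k) *
      b ^ (∑ k ∈ range n, (k : ℝ) * d ^ k) * B' ^ d ^ n := fun n =>
    (hiter n).trans <| by
      gcongr
      · exact hY0 n
      · exact (hB (mem_range_self n)).trans (le_max_left _ _)
  have hd : ‖d‖ < 1 := by rwa [Real.norm_eq_abs, abs_of_nonneg hd0]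
  have hlim : Tendsto (fun n => a ^ (∑ k ∈ range n, d ^ k) *
      b ^ (∑ k ∈ range n, (k : ℝ) * d ^ k) * B' ^ d ^ n) atTop
      (𝓝 (a ^ (1 - d)⁻¹ * b ^ (d / (1 - d) ^ 2) * B' ^ (0 : ℝ))) :=
    (((Real.continuousAt_const_rpow ha.ne').tendsto.comp
        (hasSum_geometric_of_lt_one hd0 hd1).tendsto_sum_nat).mul
      ((Real.continuousAt_const_rpow hb.ne').tendsto.comp
        (hasSum_coe_mul_geometric_of_norm_lt_one hd).tendsto_sum_nat)).mul
      ((Real.continuousAt_const_rpow hB'.ne').tendsto.comp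
        (tendsto_pow_atTop_nhds_zero_of_lt_one hd0 hd1))
  simpa only [Real.rpow_zero, mul_one, one_div] using ge_of_tendsto' hlim hbound

theorem exists_le_mul_rpow_of_isCompact {α : Type*} [TopologicalSpace α] {K : Set α}
    (hK : IsCompact K) {y Φ : α → ℝ} (hy : ContinuousOn y K) (hΦ : ContinuousOn Φ K)
    (hΦ0 : ∀ t ∈ K, 0 < Φ t) (p : ℝ) : ∃ C > (0 : ℝ), ∀ t ∈ K, y t ≤ C * Φ t ^ p := by
  have hΦp : ∀ t ∈ K, 0 < Φ t ^ p := fun t ht => Real.rpow_pos_of_pos (hΦ0 t ht) p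
  obtain ⟨B, hB⟩ := hK.bddAbove_image <| hy.div (hΦ.rpow_const fun t ht => Or.inl (hΦ0 t ht).ne')
    fun t ht => (hΦp t ht).ne'
  refine ⟨max B 1, lt_max_of_lt_right one_pos, fun t ht => ?_⟩
  have : y t / Φ t ^ p ≤ max B 1 := (hB (mem_image_of_mem _ ht)).trans (le_max_left B 1)
  rwa [div_le_iff₀ (hΦp t ht)] at this

noncomputable def dyadicStep (ε₀ : ℝ) (k : ℕ) : ℝ := ε₀ / 4 * (1 / 2) ^ k

section dyadicStep

variable {ε₀ : ℝ}

theorem dyadicStep_pos (hε₀ : 0 < ε₀) (k : ℕ) : 0 < dyadicStep ε₀ k := by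
  unfold dyadicStep; positivity

theorem dyadicStep_nonneg (hε₀ : 0 ≤ ε₀) (k : ℕ) : 0 ≤ dyadicStep ε₀ k := by
  unfold dyadicStep; positivity

theorem dyadicStep_le (hε₀ : 0 ≤ ε₀) (k : ℕ) : dyadicStep ε₀ k ≤ ε₀ := by
  have : (1 / 2 : ℝ) ^ k ≤ 1 := pow_le_one₀ (by norm_num) (by norm_num)
  unfold dyadicStep; nlinarith

theorem sum_dyadicStep_le (hε₀ : 0 ≤ ε₀) (n : ℕ) :
    ∑ k ∈ range n, dyadicStep ε₀ k ≤ ε₀ / 2 := by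
  simp only [dyadicStep, ← mul_sum]
  nlinarith [sum_geometric_two_le n]

theorem dyadicStep_rpow_neg (hε₀ : 0 ≤ ε₀) (h : ℝ) (k : ℕ) :
    dyadicStep ε₀ k ^ (-h) = (ε₀ / 4) ^ (-h) * ((1 / 2) ^ (-h)) ^ k := by
  rw [dyadicStep, Real.mul_rpow (by positivity) (by positivity),
    Real.rpow_pow_comm (by norm_num)]

theorem prod_one_sub_dyadicStep_mem (hε₀ : 0 ≤ ε₀) (hε₀' : ε₀ ≤ 1) (n : ℕ) :
    ∏ k ∈ range n, (1 - dyadicStep ε₀ k) ∈ Set.Icc (1 / 2) 1 := by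
  have hle : ∀ k ∈ range n, dyadicStep ε₀ k ≤ 1 := fun k _ => (dyadicStep_le hε₀ k).trans hε₀'
  have hnn : ∀ k ∈ range n, 0 ≤ dyadicStep ε₀ k := fun k _ => dyadicStep_nonneg hε₀ k
  constructor
  · linarith [one_sub_sum_le_prod_one_sub (range n) hnn hle, sum_dyadicStep_le hε₀ n]
  · exact prod_le_one (fun k hk => by linarith [hle k hk]) fun k hk => by linarith [hnn k hk]

theorem prod_one_add_dyadicStep_mem (hε₀ : 0 ≤ ε₀) (hε₀' : ε₀ ≤ 1 / 2) (n : ℕ) :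
    ∏ k ∈ range n, (1 + dyadicStep ε₀ k) ∈ Set.Icc 1 (3 / 2) := by
  have hnn : ∀ k ∈ range n, 0 ≤ dyadicStep ε₀ k := fun k _ => dyadicStep_nonneg hε₀ k
  constructor
  · exact one_le_prod fun k hk => by linarith [hnn k hk]
  · calc ∏ k ∈ range n, (1 + dyadicStep ε₀ k)
        ≤ Real.exp (∑ k ∈ range n, dyadicStep ε₀ k) :=
          prod_one_add_le_exp_sum _ fun k hk => by linarith [hnn k hk]
      _ ≤ Real.exp (1 / 4) := Real.exp_le_exp.2 (by linarith [sum_dyadicStep_le hε₀ n])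
      _ ≤ 3 / 2 := (Real.exp_bound_div_one_sub_of_interval (by norm_num) (by norm_num)).trans
          (by norm_num)

end dyadicStep

noncomputable def bootstrapConst (d h C M ε₀ : ℝ) : ℝ :=
  (C * M * (ε₀ / 4) ^ (-h)) ^ (1 / (1 - d)) * ((1 / 2) ^ (-h)) ^ (d / (1 - d) ^ 2)

theorem bootstrapConst_pos {d h C M ε₀ : ℝ} (hC : 0 < C) (hM : 0 < M) (hε₀ : 0 < ε₀) :
    0 < bootstrapConst d h C M ε₀ := by
  unfold bootstrapConst; positivity

theorem le_bootstrapConst_mul_rpow_of_chain {d h C M ε₀ : ℝ} (hd0 : 0 ≤ d) (hd1 : d < 1)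
    (hC : 0 < C) (hM : 0 < M) (hε₀ : 0 < ε₀) {y Φ : ℝ → ℝ} {I : Set ℝ} (hI : IsCompact I)
    (hy : ContinuousOn y I) (hy0 : ∀ t ∈ I, 0 ≤ y t) {ρ : ℕ → ℝ} (hρ : ∀ n, ρ n ∈ I)
    (hΦ0 : 0 < Φ (ρ 0)) (hΦ : ∀ n, Φ (ρ n) ≤ M * Φ (ρ 0))
    (hstep : ∀ n, y (ρ n) ≤ C * dyadicStep ε₀ n ^ (-h) * Φ (ρ n) * y (ρ (n + 1)) ^ d) :
    y (ρ 0) ≤ bootstrapConst d h C M ε₀ * Φ (ρ 0) ^ (1 / (1 - d)) := by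
  have hYB : BddAbove (range fun n => y (ρ n)) :=
    (hI.bddAbove_image hy).mono (range_subset_iff.2 fun n => mem_image_of_mem y (hρ n))
  have hstep' : ∀ n, y (ρ n) ≤ C * M * Φ (ρ 0) * (ε₀ / 4) ^ (-h) * ((1 / 2) ^ (-h)) ^ n *
      y (ρ (n + 1)) ^ d := fun n =>
    calc y (ρ n) ≤ C * dyadicStep ε₀ n ^ (-h) * Φ (ρ n) * y (ρ (n + 1)) ^ d := hstep n
      _ ≤ C * dyadicStep ε₀ n ^ (-h) * (M * Φ (ρ 0)) * y (ρ (n + 1)) ^ d := by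
          have := dyadicStep_nonneg hε₀.le n
          have := Real.rpow_nonneg (hy0 _ (hρ (n + 1))) d
          gcongr
          exact hΦ n
      _ = _ := by rw [dyadicStep_rpow_neg hε₀.le]; ring
  calc y (ρ 0) ≤ (C * M * Φ (ρ 0) * (ε₀ / 4) ^ (-h)) ^ (1 / (1 - d)) *
        ((1 / 2) ^ (-h)) ^ (d / (1 - d) ^ 2) :=
      le_of_le_mul_pow_mul_rpow hd0 hd1 (by positivity) (by positivity)
        (fun n => hy0 _ (hρ n)) hYB hstep'
    _ = bootstrapConst d h C M ε₀ * Φ (ρ 0) ^ (1 / (1 - d)) := by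
      rw [bootstrapConst, mul_right_comm (C * M), Real.mul_rpow (by positivity) hΦ0.le]
      ring

theorem le_bootstrapConst_mul_rpow_of_backward {d h C M ε₀ R : ℝ} (hd0 : 0 ≤ d) (hd1 : d < 1)
    (hC : 0 < C) (hM : 0 < M) (hε₀ : 0 < ε₀) (hε₀' : ε₀ ≤ 1) {y Φ : ℝ → ℝ}
    (hy : ContinuousOn y (Set.Ioc 0 R)) (hy0 : ∀ t ∈ Set.Ioc (0 : ℝ) R, 0 ≤ y t)
    (hback : ∀ ε ∈ Set.Ioc (0 : ℝ) ε₀, ∀ r ∈ Set.Ioc (0 : ℝ) R,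
      y r ≤ C * ε ^ (-h) * Φ r * y (r * (1 - ε)) ^ d ∧ ∀ τ ∈ Set.Icc (r / 2) r, Φ τ ≤ M * Φ r)
    {r : ℝ} (hr : r ∈ Set.Ioc 0 R) (hΦr : 0 < Φ r) :
    y r ≤ bootstrapConst d h C M ε₀ * Φ r ^ (1 / (1 - d)) := by
  have hI : Set.Icc (r / 2) r ⊆ Set.Ioc 0 R := fun t ht =>
    ⟨by linarith [ht.1, hr.1], ht.2.trans hr.2⟩
  set ρ : ℕ → ℝ := fun n => r * ∏ k ∈ range n, (1 - dyadicStep ε₀ k)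
  have hρ : ∀ n, ρ n ∈ Set.Icc (r / 2) r := fun n => by
    obtain ⟨h₁, h₂⟩ := prod_one_sub_dyadicStep_mem hε₀.le hε₀' n
    constructor <;> nlinarith [hr.1]
  have hρ0 : ρ 0 = r := by simp [ρ]
  have hρ_succ : ∀ n, ρ (n + 1) = ρ n * (1 - dyadicStep ε₀ n) := fun n => by
    simp only [ρ, prod_range_succ, mul_assoc]
  have key := le_bootstrapConst_mul_rpow_of_chain (h := h) hd0 hd1 hC hM hε₀ isCompact_Icc
    (hy.mono hI) (fun t ht => hy0 t (hI ht)) hρ (hρ0 ▸ hΦr)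
    (fun n => hρ0 ▸ (hback ε₀ ⟨hε₀, le_rfl⟩ r hr).2 _ (hρ n))
    (fun n => hρ_succ n ▸ (hback _ ⟨dyadicStep_pos hε₀ n, dyadicStep_le hε₀.le n⟩ _ (hI (hρ n))).1)
  rwa [hρ0] at key

theorem le_bootstrapConst_mul_rpow_of_forward {d h C M ε₀ R : ℝ} (hd0 : 0 ≤ d) (hd1 : d < 1)
    (hC : 0 < C) (hM : 0 < M) (hε₀ : 0 < ε₀) (hε₀' : ε₀ ≤ 1 / 2) {y Φ : ℝ → ℝ}
    (hy : ContinuousOn y (Set.Ioc 0 R)) (hy0 : ∀ t ∈ Set.Ioc (0 : ℝ) R, 0 ≤ y t)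
    (hforw : ∀ ε ∈ Set.Ioc (0 : ℝ) ε₀, ∀ r ∈ Set.Ioc (0 : ℝ) R,
      y r ≤ C * ε ^ (-h) * Φ r * y (r * (1 + ε)) ^ d ∧
        ∀ τ ∈ Set.Icc r (3 * r / 2), Φ τ ≤ M * Φ r)
    {r : ℝ} (hr0 : 0 < r) (hrR : 3 * r / 2 ≤ R) (hΦr : 0 < Φ r) :
    y r ≤ bootstrapConst d h C M ε₀ * Φ r ^ (1 / (1 - d)) := by
  have hI : Set.Icc r (3 * r / 2) ⊆ Set.Ioc 0 R := fun t ht => ⟨hr0.trans_le ht.1, ht.2.trans hrR⟩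
  set ρ : ℕ → ℝ := fun n => r * ∏ k ∈ range n, (1 + dyadicStep ε₀ k)
  have hρ : ∀ n, ρ n ∈ Set.Icc r (3 * r / 2) := fun n => by
    obtain ⟨h₁, h₂⟩ := prod_one_add_dyadicStep_mem hε₀.le hε₀' n
    constructor <;> nlinarith
  have hρ0 : ρ 0 = r := by simp [ρ]
  have hρ_succ : ∀ n, ρ (n + 1) = ρ n * (1 + dyadicStep ε₀ n) := fun n => by
    simp only [ρ, prod_range_succ, mul_assoc]
  have key := le_bootstrapConst_mul_rpow_of_chain (h := h) hd0 hd1 hC hM hε₀ isCompact_Icc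
    (hy.mono hI) (fun t ht => hy0 t (hI ht)) hρ (hρ0 ▸ hΦr)
    (fun n => hρ0 ▸ (hforw ε₀ ⟨hε₀, le_rfl⟩ r (hI ⟨le_rfl, by linarith⟩)).2 _ (hρ n))
    (fun n => hρ_succ n ▸ (hforw _ ⟨dyadicStep_pos hε₀ n, dyadicStep_le hε₀.le n⟩ _ (hI (hρ n))).1)
  rwa [hρ0] at key

/-- Lemma 3.2: the bootstrap lemma.  If `d ∈ (0,1)` and the continuous
positive functions `y, Φ` on `(0,R]` satisfy, for all `ε ∈ (0,ε₀]` and `r ∈ (0,R/2]`,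
either `y(r) ≤ C ε^{-h} Φ(r) y(r(1−ε))^d` together with `max_{[r/2,r]} Φ ≤ M Φ(r)`, or
`y(r) ≤ C ε^{-h} Φ(r) y(r(1+ε))^d` together with `max_{[r,3r/2]} Φ ≤ M Φ(r)`, then
`y(r) ≤ C' Φ(r)^{1/(1−d)}` on `(0,R/2]` for some `C' > 0`. -/
theorem stmt4 (d h R : ℝ) (hd0 : 0 < d) (hd1 : d < 1) (hR : 0 < R)
    (y Φ : ℝ → ℝ)
    (hycont : ContinuousOn y (Set.Ioc 0 R)) (hΦcont : ContinuousOn Φ (Set.Ioc 0 R))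
    (hypos : ∀ r ∈ Set.Ioc (0:ℝ) R, 0 < y r) (hΦpos : ∀ r ∈ Set.Ioc (0:ℝ) R, 0 < Φ r)
    (C M ε₀ : ℝ) (hC : 0 < C) (hM : 0 < M) (hε₀ : 0 < ε₀) (hε₀' : ε₀ ≤ 1 / 2)
    (hmain :
      (∀ ε ∈ Set.Ioc (0:ℝ) ε₀, ∀ r ∈ Set.Ioc (0:ℝ) (R / 2),
        y r ≤ C * ε ^ (-h) * Φ r * y (r * (1 - ε)) ^ d ∧
        ∀ τ ∈ Set.Icc (r / 2) r, Φ τ ≤ M * Φ r) ∨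
      (∀ ε ∈ Set.Ioc (0:ℝ) ε₀, ∀ r ∈ Set.Ioc (0:ℝ) (R / 2),
        y r ≤ C * ε ^ (-h) * Φ r * y (r * (1 + ε)) ^ d ∧
        ∀ τ ∈ Set.Icc r (3 * r / 2), Φ τ ≤ M * Φ r)) :
    ∃ C' > (0:ℝ), ∀ r ∈ Set.Ioc (0:ℝ) (R / 2), y r ≤ C' * Φ r ^ (1 / (1 - d)) := by
  have hsub : Set.Ioc 0 (R / 2) ⊆ Set.Ioc 0 R := Ioc_subset_Ioc_right (by linarith)
  have hy0 : ∀ t ∈ Set.Ioc (0 : ℝ) (R / 2), 0 ≤ y t := fun t ht => (hypos t (hsub ht)).le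
  rcases hmain with hback | hforw
  · exact ⟨_, bootstrapConst_pos hC hM hε₀, fun r hr =>
      le_bootstrapConst_mul_rpow_of_backward hd0.le hd1 hC hM hε₀ (by linarith) (hycont.mono hsub)
        hy0 hback hr (hΦpos r (hsub hr))⟩
  · have hK : Set.Icc (R / 3) (R / 2) ⊆ Set.Ioc 0 R := fun t ht =>
      ⟨by linarith [ht.1], by linarith [ht.2]⟩
    obtain ⟨C₁, hC₁, hcompact⟩ := exists_le_mul_rpow_of_isCompact isCompact_Icc (hycont.mono hK)
      (hΦcont.mono hK) (fun t ht => hΦpos t (hK ht)) (1 / (1 - d))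
    refine ⟨max (bootstrapConst d h C M ε₀) C₁, lt_max_of_lt_right hC₁, fun r hr => ?_⟩
    have hΦr := hΦpos r (hsub hr)
    have hΦr' : 0 ≤ Φ r ^ (1 / (1 - d)) := Real.rpow_nonneg hΦr.le _
    rcases le_or_gt r (R / 3) with hr3 | hr3
    · exact (le_bootstrapConst_mul_rpow_of_forward hd0.le hd1 hC hM hε₀ hε₀' (hycont.mono hsub)
        hy0 hforw hr.1 (by linarith) hΦr).trans (by gcongr; exact le_max_left _ _)
    · exact (hcompact r ⟨hr3.le, hr.2⟩).trans (by gcongr; exact le_max_right _ _)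
end

section
/- Assume q > p > 1. Let (u,v) be a positive classical solution of the system u_t − Δu + v^p = 0, v_t − Δv + u^q = 0 on Ω×(0,T). Set d = (q+1)/(p+1), c = 2^{1−p}·min(d, 2^{1−q}), k = c^{−1/(d−1)}, and define F(x,t) = (k+u(x,t))^d + v(x,t). Then at every point of Ω×(0,T) one has ∂_t F − ΔF + c·(k+u)^{d−1}·F^p ≤ k^q, and consequently ∂_t F − ΔF + F^p ≤ k^q; that is, F is a classical subsolution of the equation U_t − ΔU + U^p = k^q on Ω×(0,T). -/
open MeasureTheory Filter Set Metric Topology ENNReal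

/-- The Laplacian in the space variable: the trace of the second derivative. -/
noncomputable def plap {N : ℕ} (f : EuclideanSpace ℝ (Fin N) → ℝ)
    (x : EuclideanSpace ℝ (Fin N)) : ℝ :=
  ∑ i : Fin N, iteratedFDeriv ℝ 2 f x ![EuclideanSpace.single i 1, EuclideanSpace.single i 1]

/-- The time interval `(0, T)` for `T ∈ (0, ∞]`. -/
def timeIoo (T : ℝ≥0∞) : Set ℝ := {t : ℝ | 0 < t ∧ ENNReal.ofReal t < T}

/-- `(u, v)` is a positive classical solution of the system
`u_t − Δu + v^p = 0`, `v_t − Δv + u^q = 0` on `Ω × (0, T)`. -/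
structure IsPosSol {N : ℕ} (Ω : Set (EuclideanSpace ℝ (Fin N))) (T : ℝ≥0∞) (p q : ℝ)
    (u v : EuclideanSpace ℝ (Fin N) → ℝ → ℝ) : Prop where
  upos : ∀ x ∈ Ω, ∀ t ∈ timeIoo T, 0 < u x t
  vpos : ∀ x ∈ Ω, ∀ t ∈ timeIoo T, 0 < v x t
  ucont : ContinuousOn (fun z : EuclideanSpace ℝ (Fin N) × ℝ => u z.1 z.2) (Ω ×ˢ timeIoo T)
  vcont : ContinuousOn (fun z : EuclideanSpace ℝ (Fin N) × ℝ => v z.1 z.2) (Ω ×ˢ timeIoo T)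
  uxreg : ∀ t ∈ timeIoo T, ContDiffOn ℝ 2 (fun x => u x t) Ω
  vxreg : ∀ t ∈ timeIoo T, ContDiffOn ℝ 2 (fun x => v x t) Ω
  utreg : ∀ x ∈ Ω, ContDiffOn ℝ 1 (fun t => u x t) (timeIoo T)
  vtreg : ∀ x ∈ Ω, ContDiffOn ℝ 1 (fun t => v x t) (timeIoo T)
  ueq : ∀ x ∈ Ω, ∀ t ∈ timeIoo T,
    deriv (fun s => u x s) t - plap (fun y => u y t) x + v x t ^ p = 0
  veq : ∀ x ∈ Ω, ∀ t ∈ timeIoo T,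
    deriv (fun s => v x s) t - plap (fun y => v y t) x + u x t ^ q = 0

/-!
Write `w = k + u`. By the chain rule, `F_t - ΔF = d w^(d-1) (u_t - Δu) + (v_t - Δv) -
d (d-1) w^(d-2) |∇u|²`, and since `d > 1` the gradient term can be dropped, leaving
`F_t - ΔF ≤ -d w^(d-1) v^p - u^q`. On the other hand, convexity of `s ↦ s^r` gives
`(a + b)^r ≤ 2^(r-1) (a^r + b^r)`; applied to `F = w^d + v` and to `w = k + u`, together with
`w^(d-1) (w^d)^p = w^q`, the choice of `c` yields `c w^(d-1) F^p ≤ d w^(d-1) v^p + u^q + k^q`.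
Adding up gives the first inequality. The choice of `k` means `c k^(d-1) = 1`, hence
`c w^(d-1) ≥ 1`, which gives the second.
-/

theorem Real.rpow_add_le_mul_rpow_add_rpow {a b r : ℝ} (ha : 0 ≤ a) (hb : 0 ≤ b) (hr : 1 ≤ r) :
    (a + b) ^ r ≤ 2 ^ (r - 1) * (a ^ r + b ^ r) := by
  lift a to NNReal using ha
  lift b to NNReal using hb
  exact_mod_cast NNReal.rpow_add_le_mul_rpow_add_rpow a b hr

theorem mul_rpow_mul_rpow_add_le {p q d c k U V : ℝ} (hp : 1 ≤ p) (hq : 1 ≤ q)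
    (hdpq : d * (p + 1) = q + 1) (hc : 0 ≤ c) (hcd : c * 2 ^ (p - 1) ≤ d)
    (hc1 : c * 2 ^ (p - 1) * 2 ^ (q - 1) ≤ 1) (hk : 0 ≤ k) (hU : 0 ≤ U) (hV : 0 ≤ V) :
    c * (k + U) ^ (d - 1) * ((k + U) ^ d + V) ^ p
      ≤ d * (k + U) ^ (d - 1) * V ^ p + U ^ q + k ^ q := by
  set w := k + U
  have hw : 0 ≤ w := add_nonneg hk hU
  have hwq : w ^ (d - 1) * (w ^ d) ^ p = w ^ q := by
    rw [← Real.rpow_mul hw, ← Real.rpow_add' hw] <;> [congr 1; skip] <;> linarith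
  calc c * w ^ (d - 1) * (w ^ d + V) ^ p
      ≤ c * w ^ (d - 1) * (2 ^ (p - 1) * ((w ^ d) ^ p + V ^ p)) := by
        gcongr
        exact Real.rpow_add_le_mul_rpow_add_rpow (by positivity) hV hp
    _ = c * 2 ^ (p - 1) * w ^ q + c * 2 ^ (p - 1) * (w ^ (d - 1) * V ^ p) := by
        rw [← hwq]; ring
    _ ≤ c * 2 ^ (p - 1) * (2 ^ (q - 1) * (k ^ q + U ^ q)) + d * (w ^ (d - 1) * V ^ p) := by
        gcongr
        exact Real.rpow_add_le_mul_rpow_add_rpow hk hU hq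
    _ ≤ 1 * (k ^ q + U ^ q) + d * (w ^ (d - 1) * V ^ p) := by
        rw [← mul_assoc]; gcongr
    _ = d * w ^ (d - 1) * V ^ p + U ^ q + k ^ q := by ring

theorem mul_rpow_neg_inv_rpow {c e : ℝ} (hc : 0 < c) (he : e ≠ 0) :
    c * (c ^ (-(1 / e))) ^ e = 1 := by
  rw [← Real.rpow_mul hc.le, show -(1 / e) * e = -1 by field_simp, Real.rpow_neg_one,
    mul_inv_cancel₀ hc.ne']

theorem two_rpow_one_sub_mul_two_rpow_sub_one (r : ℝ) : (2 : ℝ) ^ (1 - r) * 2 ^ (r - 1) = 1 := by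
  rw [← Real.rpow_add two_pos]; norm_num

theorem HasDerivAt.rpow_const_add_add {f g : ℝ → ℝ} {f' g' k d t : ℝ} (hf : HasDerivAt f f' t)
    (hg : HasDerivAt g g' t) (hpos : 0 < k + f t) :
    HasDerivAt (fun s => (k + f s) ^ d + g s) (d * (k + f t) ^ (d - 1) * f' + g') t := by
  rw [show d * (k + f t) ^ (d - 1) * f' = f' * d * (k + f t) ^ (d - 1) by ring]
  exact ((hf.const_add k).rpow_const (Or.inl hpos.ne')).add hg

open Laplacian InnerProductSpace

section Laplacian

variable {E : Type*} [NormedAddCommGroup E] [InnerProductSpace ℝ E] [FiniteDimensional ℝ E]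

theorem laplacian_comp_of_hasDerivAt {ι : Type*} [Fintype ι] (v : OrthonormalBasis ι ℝ E)
    {h : E → ℝ} {φ φ' : ℝ → ℝ} {φ'' : ℝ} {x : E} (hh : ContDiffAt ℝ 2 h x)
    (hφ : ∀ᶠ s in 𝓝 (h x), HasDerivAt φ (φ' s) s) (hφ' : HasDerivAt φ' φ'' (h x)) :
    Δ (φ ∘ h) x = φ' (h x) * Δ h x + φ'' * ∑ i, fderiv ℝ h x (v i) ^ 2 := by
  have hDh : ∀ᶠ y in 𝓝 x, HasFDerivAt (φ ∘ h) (φ' (h y) • fderiv ℝ h y) y := by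
    filter_upwards [hh.eventually (by simp), hh.continuousAt.eventually hφ] with y hy hφy
    exact hφy.comp_hasFDerivAt y (hy.differentiableAt two_ne_zero).hasFDerivAt
  have hD2h : HasFDerivAt (fderiv ℝ h) (fderiv ℝ (fderiv ℝ h) x) x :=
    ((hh.fderiv_right (m := 1) one_add_one_eq_two.le).differentiableAt one_ne_zero).hasFDerivAt
  have hD2 : fderiv ℝ (fderiv ℝ (φ ∘ h)) x = φ' (h x) • fderiv ℝ (fderiv ℝ h) x
      + (φ'' • fderiv ℝ h x).smulRight (fderiv ℝ h x) := by
    have hev : fderiv ℝ (φ ∘ h) =ᶠ[𝓝 x] fun y => φ' (h y) • fderiv ℝ h y :=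
      hDh.mono fun y hy => hy.fderiv
    rw [hev.fderiv_eq]
    exact ((hφ'.comp_hasFDerivAt x (hh.differentiableAt two_ne_zero).hasFDerivAt).smul hD2h).fderiv
  simp only [laplacian_eq_iteratedFDeriv_orthonormalBasis _ v, iteratedFDeriv_two_apply, hD2]
  simp [Finset.mul_sum, ← Finset.sum_add_distrib, sq, mul_assoc]

theorem le_laplacian_rpow_comp {h : E → ℝ} {x : E} {d : ℝ} (hh : ContDiffAt ℝ 2 h x)
    (hx : 0 < h x) (hd : 1 ≤ d) :
    d * h x ^ (d - 1) * Δ h x ≤ Δ (fun y => h y ^ d) x := by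
  have hφ : ∀ᶠ s in 𝓝 (h x), HasDerivAt (fun s => s ^ d) (d * s ^ (d - 1)) s :=
    (lt_mem_nhds hx).mono fun s hs => Real.hasDerivAt_rpow_const (Or.inl hs.ne')
  have hφ' := (Real.hasDerivAt_rpow_const (p := d - 1) (Or.inl hx.ne')).const_mul d
  have := laplacian_comp_of_hasDerivAt (stdOrthonormalBasis ℝ E) hh hφ hφ'
  rw [Function.comp_def] at this
  rw [this, le_add_iff_nonneg_right]
  have hd1 : 0 ≤ d - 1 := by linarith
  positivity

theorem le_laplacian_rpow_const_add_add {f g : E → ℝ} {x : E} {k d : ℝ}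
    (hf : ContDiffAt ℝ 2 f x) (hg : ContDiffAt ℝ 2 g x) (hpos : 0 < k + f x) (hd : 1 ≤ d) :
    d * (k + f x) ^ (d - 1) * Δ f x + Δ g x ≤ Δ (fun y => (k + f y) ^ d + g y) x := by
  have hkf : ContDiffAt ℝ 2 (fun y => k + f y) x := contDiffAt_const.add hf
  have hΔkf : Δ (fun y => k + f y) x = Δ f x := by
    rw [show (fun y => k + f y) = (fun _ => k) + f from rfl, contDiffAt_const.laplacian_add hf]
    simp
  have := le_laplacian_rpow_comp hkf hpos hd
  rw [hΔkf] at this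
  rw [show (fun y => (k + f y) ^ d + g y) = (fun y => (k + f y) ^ d) + g from rfl,
    (hkf.rpow_const_of_ne hpos.ne').laplacian_add hg]
  linarith

end Laplacian

theorem plap_eq_laplacian {N : ℕ} (f : EuclideanSpace ℝ (Fin N) → ℝ) : plap f = Δ f := by
  ext x
  simp [plap, laplacian_eq_iteratedFDeriv_orthonormalBasis f (EuclideanSpace.basisFun (Fin N) ℝ)]

theorem isOpen_timeIoo (T : ℝ≥0∞) : IsOpen (timeIoo T) :=
  isOpen_Ioi.inter (isOpen_Iio.preimage ENNReal.continuous_ofReal)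

theorem IsPosSol.deriv_sub_plap_rpow_const_add_add_le {N : ℕ} {Ω : Set (EuclideanSpace ℝ (Fin N))}
    {T : ℝ≥0∞} {p q : ℝ} {u v : EuclideanSpace ℝ (Fin N) → ℝ → ℝ} (hsol : IsPosSol Ω T p q u v)
    (hΩ : IsOpen Ω) {x : EuclideanSpace ℝ (Fin N)} (hx : x ∈ Ω) {t : ℝ} (ht : t ∈ timeIoo T)
    {k d : ℝ} (hk : 0 ≤ k) (hd : 1 ≤ d) :
    deriv (fun s => (k + u x s) ^ d + v x s) t - plap (fun y => (k + u y t) ^ d + v y t) x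
      ≤ -(d * (k + u x t) ^ (d - 1) * v x t ^ p) - u x t ^ q := by
  have hpos : 0 < k + u x t := by linarith [hsol.upos x hx t ht]
  have hut : HasDerivAt (fun s => u x s) (deriv (fun s => u x s) t) t :=
    (((hsol.utreg x hx).contDiffAt ((isOpen_timeIoo T).mem_nhds ht)).differentiableAt
      one_ne_zero).hasDerivAt
  have hvt : HasDerivAt (fun s => v x s) (deriv (fun s => v x s) t) t :=
    (((hsol.vtreg x hx).contDiffAt ((isOpen_timeIoo T).mem_nhds ht)).differentiableAt
      one_ne_zero).hasDerivAt
  have hΔ := le_laplacian_rpow_const_add_add ((hsol.uxreg t ht).contDiffAt (hΩ.mem_nhds hx))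
    ((hsol.vxreg t ht).contDiffAt (hΩ.mem_nhds hx)) hpos hd
  simp only [← plap_eq_laplacian] at hΔ
  rw [(hut.rpow_const_add_add hvt hpos).deriv]
  linear_combination hΔ + d * (k + u x t) ^ (d - 1) * hsol.ueq x hx t ht + hsol.veq x hx t ht

theorem stmt6_general {N : ℕ} (Ω : Set (EuclideanSpace ℝ (Fin N)))
    (hΩ : IsOpen Ω) (p q : ℝ) (hp : 1 < p) (hpq : p < q)
    (T : ℝ≥0∞) (u v : EuclideanSpace ℝ (Fin N) → ℝ → ℝ)
    (hsol : IsPosSol Ω T p q u v)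
    (d c k : ℝ) (F : EuclideanSpace ℝ (Fin N) → ℝ → ℝ)
    (hd : d = (q + 1) / (p + 1))
    (hc : c = 2 ^ (1 - p) * min d (2 ^ (1 - q)))
    (hk : k = c ^ (-(1 / (d - 1))))
    (hF : F = fun x t => (k + u x t) ^ d + v x t) :
    ∀ x ∈ Ω, ∀ t ∈ timeIoo T,
      deriv (fun s => F x s) t - plap (fun y => F y t) x +
          c * (k + u x t) ^ (d - 1) * F x t ^ p ≤ k ^ q ∧
      deriv (fun s => F x s) t - plap (fun y => F y t) x + F x t ^ p ≤ k ^ q := by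
  subst hF
  have hd1 : 1 < d := by rw [hd, lt_div_iff₀ (by linarith)]; linarith
  have hc2 : c * 2 ^ (p - 1) = min d (2 ^ (1 - q)) := by
    rw [hc, mul_right_comm, two_rpow_one_sub_mul_two_rpow_sub_one, one_mul]
  have hc0 : 0 < c := hc ▸ mul_pos (by positivity) (lt_min (by linarith) (by positivity))
  have hk0 : 0 < k := hk ▸ Real.rpow_pos_of_pos hc0 _
  have hck : c * k ^ (d - 1) = 1 := hk ▸ mul_rpow_neg_inv_rpow hc0 (by linarith)
  intro x hx t ht
  beta_reduce
  have hU := hsol.upos x hx t ht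
  have hV := hsol.vpos x hx t ht
  have hheat := hsol.deriv_sub_plap_rpow_const_add_add_le hΩ hx ht hk0.le hd1.le
  have halg := mul_rpow_mul_rpow_add_le hp.le (by linarith) (by rw [hd]; field_simp) hc0.le
    (hc2 ▸ min_le_left _ _) (hc2 ▸ (mul_le_mul_of_nonneg_right (min_le_right _ _)
      (by positivity)).trans_eq (two_rpow_one_sub_mul_two_rpow_sub_one q))
    hk0.le hU.le hV.le
  have hone : 1 ≤ c * (k + u x t) ^ (d - 1) := hck.ge.trans (by gcongr; linarith)
  have hFp : ((k + u x t) ^ d + v x t) ^ p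
      ≤ c * (k + u x t) ^ (d - 1) * ((k + u x t) ^ d + v x t) ^ p :=
    le_mul_of_one_le_left (Real.rpow_nonneg (by positivity) _) hone
  exact ⟨by linarith, by linarith⟩

/-- from Proposition 3.3: for `q > p > 1`, with `d = (q+1)/(p+1)`,
`c = 2^{1−p} min(d, 2^{1−q})`, `k = c^{−1/(d−1)}` and `F = (k+u)^d + v`, one has
`F_t − ΔF + c (k+u)^{d−1} F^p ≤ k^q` and consequently `F_t − ΔF + F^p ≤ k^q`
pointwise on `Ω × (0,T)`, i.e. `F` is a classical subsolution of `U_t − ΔU + U^p = k^q`. -/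
theorem stmt6 {N : ℕ} (hN : 1 ≤ N) (Ω : Set (EuclideanSpace ℝ (Fin N)))
    (hΩ : IsOpen Ω) (hΩne : Ω.Nonempty) (p q : ℝ) (hp : 1 < p) (hpq : p < q)
    (T : ℝ≥0∞) (hT : 0 < T) (u v : EuclideanSpace ℝ (Fin N) → ℝ → ℝ)
    (hsol : IsPosSol Ω T p q u v)
    (d c k : ℝ) (F : EuclideanSpace ℝ (Fin N) → ℝ → ℝ)
    (hd : d = (q + 1) / (p + 1))
    (hc : c = 2 ^ (1 - p) * min d (2 ^ (1 - q)))
    (hk : k = c ^ (-(1 / (d - 1))))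
    (hF : F = fun x t => (k + u x t) ^ d + v x t) :
    ∀ x ∈ Ω, ∀ t ∈ timeIoo T,
      deriv (fun s => F x s) t - plap (fun y => F y t) x +
          c * (k + u x t) ^ (d - 1) * F x t ^ p ≤ k ^ q ∧
      deriv (fun s => F x s) t - plap (fun y => F y t) x + F x t ^ p ≤ k ^ q :=
  stmt6_general Ω hΩ p q hp hpq T u v hsol d c k F hd hc hk hF
end

section
/- Let N ≥ 1 be an integer and p, q > 0 with pq > 1, and set a = (p+1)/(pq−1), b = (q+1)/(pq−1). Assume min(2a, 2b) > N − 2. Define the positive constants A₊ = (2a(2a+2−N)·(2b(2b+2−N))^p)^{1/(pq−1)} and B₊ = (2b(2b+2−N)·(2a(2a+2−N))^q)^{1/(pq−1)}, and the functions u₊(x) = A₊·|x|^{−2a} and v₊(x) = B₊·|x|^{−2b} on ℝ^N∖{0}, where |x| is the Euclidean norm. Then u₊ and v₊ are smooth on ℝ^N∖{0} and satisfy −Δu₊(x) + v₊(x)^p = 0 and −Δv₊(x) + u₊(x)^q = 0 for every x ≠ 0, where Δ is the Laplacian on ℝ^N. -/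
open MeasureTheory Filter Set Metric Topology ENNReal

section Aux

variable {N : ℕ}

local notation "E" => EuclideanSpace ℝ (Fin N)

/-- The real inner product as an `ℝ`-bilinear continuous map. -/
noncomputable def innL (N : ℕ) : EuclideanSpace ℝ (Fin N) →L[ℝ]
    EuclideanSpace ℝ (Fin N) →L[ℝ] ℝ := innerSL ℝ

@[simp] lemma innL_apply (x v : E) : innL N x v = inner ℝ x v := rfl

lemma norm_rpow_eq (y : E) (α : ℝ) : (‖y‖ ^ 2 : ℝ) ^ (α / 2) = ‖y‖ ^ α := by
  rw [← Real.rpow_natCast ‖y‖ 2, ← Real.rpow_mul (norm_nonneg y)]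
  norm_num
  rw [show (2:ℝ) * (α / 2) = α by ring]

lemma hasFDerivAt_cpow (c α : ℝ) {x : E} (hx : x ≠ 0) :
    HasFDerivAt (fun y : E => c * ‖y‖ ^ α)
      ((c * α * ‖x‖ ^ (α - 2)) • (innerSL ℝ x : E →L[ℝ] ℝ)) x := by
  have hnx : (0:ℝ) < ‖x‖ := norm_pos_iff.mpr hx
  have h1 : HasFDerivAt (fun y : E => ‖y‖ ^ 2) (2 • (innerSL ℝ x : E →L[ℝ] ℝ)) x :=
    (hasStrictFDerivAt_norm_sq x).hasFDerivAt
  have h2 := (h1.rpow_const (p := α / 2) (Or.inl (by positivity))).const_mul c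
  have heq : (fun y : E => c * ((‖y‖ ^ 2 : ℝ) ^ (α / 2))) = fun y : E => c * ‖y‖ ^ α := by
    funext y; rw [norm_rpow_eq]
  rw [heq] at h2
  have h3 : (‖x‖ ^ 2 : ℝ) ^ (α / 2 - 1) = ‖x‖ ^ (α - 2) := by
    rw [show α / 2 - 1 = (α - 2) / 2 by ring, norm_rpow_eq]
  refine h2.congr_fderiv ?_
  rw [h3]
  ext v
  simp [smul_smul]
  ring

lemma norm_sq_eq_sum (x : E) : ‖x‖ ^ 2 = ∑ i, x i ^ 2 := by
  rw [EuclideanSpace.norm_eq, Real.sq_sqrt (by positivity)]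
  simp [sq_abs]

lemma plap_cpow (c α : ℝ) {x : E} (hx : x ≠ 0) :
    plap (fun y : E => c * ‖y‖ ^ α) x = c * α * (α + N - 2) * ‖x‖ ^ (α - 2) := by
  have hnx : (0:ℝ) < ‖x‖ := norm_pos_iff.mpr hx
  set s : E → ℝ := fun y => c * α * ‖y‖ ^ (α - 2) with hs
  set s' : E →L[ℝ] ℝ := (c * α * (α - 2) * ‖x‖ ^ (α - 4)) • (innerSL ℝ x : E →L[ℝ] ℝ) with hs'
  have hsd : HasFDerivAt s s' x := by
    have := hasFDerivAt_cpow (c * α) (α - 2) hx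
    simpa [hs, hs', show α - 2 - 2 = α - 4 by ring, mul_assoc] using this
  have hFd : HasFDerivAt (fun y : E => s y • innL N y)
      (s x • innL N + s'.smulRight (innL N x)) x :=
    hsd.smul (innL N).hasFDerivAt
  have hev : fderiv ℝ (fun y : E => c * ‖y‖ ^ α) =ᶠ[nhds x] fun y => s y • innL N y := by
    filter_upwards [IsOpen.mem_nhds isOpen_compl_singleton hx] with y hy
    exact (hasFDerivAt_cpow c α hy).fderiv
  have h2 : fderiv ℝ (fderiv ℝ (fun y : E => c * ‖y‖ ^ α)) x
      = s x • innL N + s'.smulRight (innL N x) := by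
    rw [hev.fderiv_eq, hFd.fderiv]
  unfold plap
  have key : ∀ i : Fin N,
      iteratedFDeriv ℝ 2 (fun y : E => c * ‖y‖ ^ α) x
        ![EuclideanSpace.single i 1, EuclideanSpace.single i 1]
      = s x + (c * α * (α - 2) * ‖x‖ ^ (α - 4)) * (x i * x i) := by
    intro i
    rw [iteratedFDeriv_two_apply, h2]
    simp [hs', ContinuousLinearMap.smulRight_apply, EuclideanSpace.inner_single_right,
      EuclideanSpace.inner_single_left, innL_apply, real_inner_comm]
    ring
  simp only [key]
  rw [Finset.sum_add_distrib, Finset.sum_const, ← Finset.mul_sum]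
  have hss : ∑ i, x i * x i = ‖x‖ ^ 2 := by
    rw [norm_sq_eq_sum]; simp [sq]
  rw [hss]
  have h4 : ‖x‖ ^ (α - 4) * ‖x‖ ^ 2 = ‖x‖ ^ (α - 2) := by
    rw [← Real.rpow_natCast ‖x‖ 2, ← Real.rpow_add hnx]
    norm_num
    rw [show α - 4 + 2 = α - 2 by ring]
  simp only [hs, Finset.card_univ, Fintype.card_fin, nsmul_eq_mul]
  linear_combination (c * α * (α - 2)) * h4

lemma contDiffOn_cpow (c α : ℝ) :
    ContDiffOn ℝ (⊤ : ℕ∞) (fun x : E => c * ‖x‖ ^ α) ({0}ᶜ : Set E) := by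
  intro x hx
  have hx' : x ≠ 0 := hx
  have hnx : (0:ℝ) < ‖x‖ := norm_pos_iff.mpr hx'
  apply ContDiffAt.contDiffWithinAt
  have h1 : ContDiffAt ℝ (⊤ : ℕ∞) (fun y : E => (‖y‖ ^ 2 : ℝ) ^ (α / 2)) x :=
    (contDiff_norm_sq ℝ).contDiffAt.rpow_const_of_ne (by positivity)
  have heq : (fun y : E => c * ‖y‖ ^ α) = fun y : E => c * ((‖y‖ ^ 2 : ℝ) ^ (α / 2)) := by
    funext y; rw [norm_rpow_eq]
  rw [heq]
  exact contDiffAt_const.mul h1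

end Aux

/-- the singular particular solutions of the associated elliptic system.
For `pq > 1` with `min(2a,2b) > N−2`, the functions `u₊(x) = A₊ |x|^{−2a}`,
`v₊(x) = B₊ |x|^{−2b}` (with the explicit positive constants `A₊, B₊`) are smooth on
`ℝ^N \ {0}` and satisfy `−Δu₊ + v₊^p = 0`, `−Δv₊ + u₊^q = 0` there. -/
theorem stmt15 {N : ℕ} (hN : 1 ≤ N) (p q : ℝ) (hp : 0 < p) (hq : 0 < q)
    (hpq : 1 < p * q) (a b A B : ℝ)
    (ha : a = (p + 1) / (p * q - 1)) (hb : b = (q + 1) / (p * q - 1))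
    (hmin : (N : ℝ) - 2 < min (2 * a) (2 * b))
    (hA : A = (2 * a * (2 * a + 2 - N) * (2 * b * (2 * b + 2 - N)) ^ p) ^ (1 / (p * q - 1)))
    (hB : B = (2 * b * (2 * b + 2 - N) * (2 * a * (2 * a + 2 - N)) ^ q) ^ (1 / (p * q - 1))) :
    0 < A ∧ 0 < B ∧
    ContDiffOn ℝ (⊤ : ℕ∞) (fun x : EuclideanSpace ℝ (Fin N) => A * ‖x‖ ^ (-(2 * a)))
      ({0}ᶜ : Set (EuclideanSpace ℝ (Fin N))) ∧
    ContDiffOn ℝ (⊤ : ℕ∞) (fun x : EuclideanSpace ℝ (Fin N) => B * ‖x‖ ^ (-(2 * b)))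
      ({0}ᶜ : Set (EuclideanSpace ℝ (Fin N))) ∧
    ∀ x : EuclideanSpace ℝ (Fin N), x ≠ 0 →
      -plap (fun y : EuclideanSpace ℝ (Fin N) => A * ‖y‖ ^ (-(2 * a))) x +
        (B * ‖x‖ ^ (-(2 * b))) ^ p = 0 ∧
      -plap (fun y : EuclideanSpace ℝ (Fin N) => B * ‖y‖ ^ (-(2 * b))) x +
        (A * ‖x‖ ^ (-(2 * a))) ^ q = 0 := by
  have hpq1 : (0:ℝ) < p * q - 1 := by linarith
  have ha' : 0 < a := ha ▸ div_pos (by linarith) hpq1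
  have hb' : 0 < b := hb ▸ div_pos (by linarith) hpq1
  have h2a : (0:ℝ) < 2 * a + 2 - N := by
    have := lt_of_lt_of_le hmin (min_le_left _ _); linarith
  have h2b : (0:ℝ) < 2 * b + 2 - N := by
    have := lt_of_lt_of_le hmin (min_le_right _ _); linarith
  set K : ℝ := 2 * a * (2 * a + 2 - N) with hK
  set L : ℝ := 2 * b * (2 * b + 2 - N) with hL
  have hKpos : 0 < K := by positivity
  have hLpos : 0 < L := by positivity
  set g : ℝ := 1 / (p * q - 1) with hg
  have hApos : 0 < A := by
    rw [hA]; exact Real.rpow_pos_of_pos (by positivity) _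
  have hBpos : 0 < B := by
    rw [hB]; exact Real.rpow_pos_of_pos (by positivity) _
  -- key algebraic identities
  have hbp : b * p = a + 1 := by
    rw [ha, hb, div_mul_eq_mul_div, div_add_one hpq1.ne']; congr 1; ring
  have haq : a * q = b + 1 := by
    rw [ha, hb]; field_simp; ring
  have eB : B ^ p = K * A := by
    have h1 : B ^ p = L ^ (g * p) * K ^ (q * (g * p)) := by
      rw [hB, ← Real.rpow_mul (by positivity),
        Real.mul_rpow hLpos.le (Real.rpow_pos_of_pos hKpos _).le,
        ← Real.rpow_mul hKpos.le]
    have h2 : K * A = K ^ ((1:ℝ) + g) * L ^ (p * g) := by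
      rw [hA, Real.mul_rpow hKpos.le (Real.rpow_pos_of_pos hLpos _).le,
        ← Real.rpow_mul hLpos.le, Real.rpow_add hKpos, Real.rpow_one]
      ring
    rw [h1, h2, show q * (g * p) = (1:ℝ) + g by
        rw [hg, div_mul_eq_mul_div, one_mul, mul_div_assoc', add_div' _ _ _ hpq1.ne']; congr 1; ring,
      show g * p = p * g by ring]
    exact mul_comm _ _
  have eA : A ^ q = L * B := by
    have h1 : A ^ q = K ^ (g * q) * L ^ (p * (g * q)) := by
      rw [hA, ← Real.rpow_mul (by positivity),
        Real.mul_rpow hKpos.le (Real.rpow_pos_of_pos hLpos _).le,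
        ← Real.rpow_mul hLpos.le]
    have h2 : L * B = L ^ ((1:ℝ) + g) * K ^ (q * g) := by
      rw [hB, Real.mul_rpow hLpos.le (Real.rpow_pos_of_pos hKpos _).le,
        ← Real.rpow_mul hKpos.le, Real.rpow_add hLpos, Real.rpow_one]
      ring
    rw [h1, h2, show p * (g * q) = (1:ℝ) + g by
        rw [hg]; field_simp; try ring,
      show g * q = q * g by ring]
    exact mul_comm _ _
  refine ⟨hApos, hBpos, contDiffOn_cpow A (-(2 * a)), contDiffOn_cpow B (-(2 * b)), ?_⟩
  intro x hx
  have hnx : (0:ℝ) < ‖x‖ := norm_pos_iff.mpr hx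
  have hplapu : plap (fun y : EuclideanSpace ℝ (Fin N) => A * ‖y‖ ^ (-(2 * a))) x
      = A * K * ‖x‖ ^ (-(2 * a) - 2) := by
    rw [plap_cpow A (-(2 * a)) hx]; rw [hK]; ring_nf
  have hplapv : plap (fun y : EuclideanSpace ℝ (Fin N) => B * ‖y‖ ^ (-(2 * b))) x
      = B * L * ‖x‖ ^ (-(2 * b) - 2) := by
    rw [plap_cpow B (-(2 * b)) hx]; rw [hL]; ring_nf
  constructor
  · rw [hplapu, Real.mul_rpow hBpos.le (Real.rpow_pos_of_pos hnx _).le,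
      ← Real.rpow_mul (norm_nonneg x),
      show -(2 * b) * p = -(2 * a) - 2 by linarith [hbp], eB]
    ring
  · rw [hplapv, Real.mul_rpow hApos.le (Real.rpow_pos_of_pos hnx _).le,
      ← Real.rpow_mul (norm_nonneg x),
      show -(2 * a) * q = -(2 * b) - 2 by linarith [haq], eA]
    ring
end
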